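/- Let Q be a symmetric positive semidefinite 3×3 real matrix such that ½(tr(Q) I₃ − Q) is positive definite, let b ∈ ℝ³, d > 0, and set 𝔸 := [Q + b bᵀ/d, b; bᵀ, d] (a symmetric 4×4 matrix). Then for g = [R, p; 0, 1] ∈ SE(3), one has ℙ((I₄ − g⁻¹) 𝔸) = 0 (equivalently, g 𝔸 = 𝔸 gᵀ) if and only if either g = I₄, or there exists a unit vector v with Qv = λv for some λ ∈ ℝ such that R = 2 v vᵀ − I₃ and p = (I₃ − R) b d⁻¹. -/

import Mathlib

open Matrix BigOperators

noncomputable section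

abbrev V3 : Type := Fin 3 → ℝ
abbrev V4 : Type := (Fin 3 ⊕ Fin 1) → ℝ
abbrev V6 : Type := (Fin 3 → ℝ) × (Fin 3 → ℝ)
abbrev M3 : Type := Matrix (Fin 3) (Fin 3) ℝ
abbrev M4 : Type := Matrix (Fin 3 ⊕ Fin 1) (Fin 3 ⊕ Fin 1) ℝ

/-- cross product on ℝ³ -/
def cross (x y : V3) : V3 := crossProduct x y

/-- skew-symmetric matrix `x^×` with `x^× y = x × y` -/
def skew (x : V3) : M3 := !![0, -x 2, x 1; x 2, 0, -x 0; -x 1, x 0, 0]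

/-- rank-one matrix `x yᵀ` -/
def outer (x y : V3) : M3 := Matrix.vecMulVec x y

/-- `R` is a rotation matrix -/
def isRot (R : M3) : Prop := Rᵀ * R = 1 ∧ R.det = 1

def colV (p : V3) : Matrix (Fin 3) (Fin 1) ℝ := Matrix.of fun i _ => p i
def rowV (p : V3) : Matrix (Fin 1) (Fin 3) ℝ := Matrix.of fun _ j => p j

/-- homogeneous matrix `[R, p; 0, 1]` -/
def SE3mat (R : M3) (p : V3) : M4 := Matrix.fromBlocks R (colV p) 0 1

/-- membership in SE(3) -/
def inSE3 (g : M4) : Prop := ∃ R p, isRot R ∧ g = SE3mat R p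

/-- vector part of an element of ℝ⁴ -/
def vpart (r : V4) : V3 := fun i => r (Sum.inl i)
/-- scalar part of an element of ℝ⁴ -/
def spart (r : V4) : ℝ := r (Sum.inr 0)

/-- wedge product `b ∧ r := (b_v × r_v, b_s r_v − r_s b_v) ∈ ℝ⁶` -/
def wedge (b r : V4) : V6 :=
  (cross (vpart b) (vpart r), spart b • vpart r - spart r • vpart b)

/-- `ψ_a(A) := ½(a₃₂ − a₂₃, a₁₃ − a₃₁, a₂₁ − a₁₂)` -/
def psia (A : M3) : V3 :=
  ![(A 2 1 - A 1 2) / 2, (A 0 2 - A 2 0) / 2, (A 1 0 - A 0 1) / 2]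

/-- `ψ([A, b; c, d]) := (ψ_a(A), ½ b) ∈ ℝ⁶` -/
def psi (M : M4) : V6 :=
  (psia M.toBlocks₁₁, fun i => M (Sum.inl i) (Sum.inr 0) / 2)

/-- `ℙ([A, b; c, d]) := [(A − Aᵀ)/2, b; 0, 0]` -/
def Pproj (M : M4) : M4 :=
  Matrix.fromBlocks ((1 / 2 : ℝ) • (M.toBlocks₁₁ - M.toBlocks₁₁ᵀ)) M.toBlocks₁₂ 0 0

/-- `Ad*_g = [Rᵀ, −Rᵀ p^×; 0, Rᵀ]` acting on ℝ⁶, for `g = [R, p; 0, 1]` -/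
def AdStar (g : M4) (ξ : V6) : V6 :=
  ((g.toBlocks₁₁)ᵀ.mulVec (ξ.1 - cross (fun i => g (Sum.inl i) (Sum.inr 0)) ξ.2),
   (g.toBlocks₁₁)ᵀ.mulVec ξ.2)

/-- `(ω, v)^∧ := [ω^×, v; 0, 0]` -/
def hat (ξ : V6) : M4 := Matrix.fromBlocks (skew ξ.1) (colV ξ.2) 0 0

/-- squared Euclidean norm on ℝ³ -/
def sq3 (x : V3) : ℝ := ∑ i, x i ^ 2
/-- squared Euclidean norm on ℝ⁴ -/
def sq4 (x : V4) : ℝ := ∑ i, x i ^ 2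
/-- squared Euclidean norm on ℝ⁶ -/
def sq6 (ξ : V6) : ℝ := sq3 ξ.1 + sq3 ξ.2
/-- squared Frobenius norm of a 4×4 matrix -/
def frob4 (M : M4) : ℝ := ∑ i, ∑ j, M i j ^ 2
/-- squared Frobenius norm of a 3×3 matrix -/
def frob3 (M : M3) : ℝ := ∑ i, ∑ j, M i j ^ 2

/-- membership in `𝓜₀` (last row zero, block form `[M₁, m₂; 0, 0]`) -/
def inM0 (M : M4) : Prop := ∃ (M₁ : M3) (m₂ : V3), M = Matrix.fromBlocks M₁ (colV m₂) 0 0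

/-- `Δ_Q(u, v) := uᵀ((tr(Q) − 2 vᵀQv) I₃ − Q + 2 Q v vᵀ) u` -/
def DeltaQ (Q : M3) (u v : V3) : ℝ :=
  u ⬝ᵥ Matrix.mulVec
    ((Q.trace - 2 * (v ⬝ᵥ Q.mulVec v)) • (1 : M3) - Q + (2 : ℝ) • (Q * outer v v)) u

/-- angle-axis rotation `R_a(θ, u) = I₃ + sin θ · u^× + (1 − cos θ)(u^×)²` -/
def Ra (θ : ℝ) (u : V3) : M3 :=
  1 + Real.sin θ • skew u + (1 - Real.cos θ) • (skew u * skew u)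

/-!
Write `g = [R, p; 0, 1]`. Then `(I₄ - g⁻¹) 𝔸` has last row zero, translation block
`(I - Rᵀ) b + d Rᵀ p` and rotation block `(I - Rᵀ)(Q + b bᵀ/d) + Rᵀ p bᵀ`. The translation block
vanishes iff `p = (I - R) b/d`, and then the rotation block is `(I - Rᵀ) Q`, which is symmetric iff
`Rᵀ Q = Q R`.

For symmetric `Q` and a skew matrix `ω^×`, `Q ω^× + ω^× Q = ((tr Q · I - Q) ω)^×`. Applied to
`ω^× = R - Rᵀ`, the invertibility of `tr Q · I - Q` turns `Rᵀ Q = Q R` into `R = Rᵀ`. A symmetric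
rotation is an involution, so by Cayley–Hamilton it is `I` or has trace `-1`; in the latter case
`(R + I)/2` is a symmetric idempotent of trace one, hence `v vᵀ` with `v` a unit vector. Finally,
`2 v vᵀ - I` commutes with `Q` iff `v` is an eigenvector of `Q`.
-/

theorem colV_eq_zero_iff {x : V3} : colV x = 0 ↔ x = 0 :=
  ⟨fun h => funext fun i => congr_fun₂ h i 0, fun h => by subst h; rfl⟩

theorem mul_colV (M : M3) (x : V3) : M * colV x = colV (M *ᵥ x) := by
  ext i j
  simp [colV, mul_apply, mulVec, dotProduct]

theorem SE3mat_eq_one_iff {R : M3} {p : V3} : SE3mat R p = 1 ↔ R = 1 ∧ p = 0 := by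
  rw [SE3mat, ← fromBlocks_one, fromBlocks_inj, colV_eq_zero_iff]
  simp

theorem SE3mat_inv {R : M3} (hR : Rᵀ * R = 1) (p : V3) :
    (SE3mat R p)⁻¹ = SE3mat Rᵀ (-(Rᵀ *ᵥ p)) := by
  refine inv_eq_right_inv ?_
  rw [SE3mat, SE3mat, fromBlocks_multiply, ← fromBlocks_one]
  congr 1
  · simp [mul_eq_one_comm.mp hR]
  · rw [mul_colV, mulVec_neg, mulVec_mulVec, mul_eq_one_comm.mp hR, one_mulVec]
    ext i j
    simp [colV]
  all_goals simp

theorem Pproj_fromBlocks_eq_zero_iff (A : M3) (B : Matrix (Fin 3) (Fin 1) ℝ)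
    (C : Matrix (Fin 1) (Fin 3) ℝ) (D : Matrix (Fin 1) (Fin 1) ℝ) :
    Pproj (fromBlocks A B C D) = 0 ↔ Aᵀ = A ∧ B = 0 := by
  rw [Pproj, toBlocks_fromBlocks₁₁, toBlocks_fromBlocks₁₂, ← fromBlocks_zero, fromBlocks_inj,
    smul_eq_zero, sub_eq_zero, eq_comm (a := A)]
  norm_num

theorem one_sub_SE3mat_inv_mul {R : M3} (hR : Rᵀ * R = 1) (p : V3) (X : M3) (b : V3) (d : ℝ) :
    (1 - (SE3mat R p)⁻¹) * fromBlocks X (colV b) (rowV b) (of fun _ _ => d) =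
      fromBlocks ((1 - Rᵀ) * X + vecMulVec (Rᵀ *ᵥ p) b) (colV ((1 - Rᵀ) *ᵥ b + d • Rᵀ *ᵥ p))
        0 0 := by
  rw [SE3mat_inv hR, SE3mat, ← fromBlocks_one, sub_eq_add_neg, fromBlocks_neg, fromBlocks_add,
    fromBlocks_multiply]
  congr 1
  · ext i j
    simp [colV, rowV, mul_apply, vecMulVec_apply, sub_eq_add_neg]
  · ext i j
    simp [colV, mul_apply, mulVec, dotProduct, sub_eq_add_neg, mul_comm]
  all_goals simp

theorem one_sub_transpose_mulVec_add_smul_eq_zero_iff {R : M3} (hR : Rᵀ * R = 1) {d : ℝ}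
    (hd : d ≠ 0) (b p : V3) :
    (1 - Rᵀ) *ᵥ b + d • Rᵀ *ᵥ p = 0 ↔ p = (1 - R) *ᵥ (d⁻¹ • b) := by
  have hRRt : R * Rᵀ = 1 := mul_eq_one_comm.mp hR
  constructor
  · intro h
    have h' := congrArg (R *ᵥ ·) h
    simp only [mulVec_add, mulVec_smul, sub_mulVec, one_mulVec, mulVec_sub, mulVec_mulVec, hRRt,
      mulVec_zero] at h'
    rw [mulVec_smul, sub_mulVec, one_mulVec, eq_inv_smul_iff₀ hd]
    linear_combination (norm := module) h'
  · rintro rfl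
    rw [mulVec_mulVec, mul_sub, mul_one, hR, mulVec_smul, smul_smul, mul_inv_cancel₀ hd, one_smul,
      sub_mulVec, sub_mulVec, one_mulVec]
    abel

theorem Pproj_one_sub_SE3mat_inv_mul_eq_zero_iff {Q R : M3} (hQ : Qᵀ = Q) (hR : Rᵀ * R = 1)
    {d : ℝ} (hd : d ≠ 0) (b p : V3) :
    Pproj ((1 - (SE3mat R p)⁻¹) *
        fromBlocks (Q + d⁻¹ • outer b b) (colV b) (rowV b) (of fun _ _ => d)) = 0 ↔
      Rᵀ * Q = Q * R ∧ p = (1 - R) *ᵥ (d⁻¹ • b) := by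
  rw [one_sub_SE3mat_inv_mul hR, Pproj_fromBlocks_eq_zero_iff, colV_eq_zero_iff,
    one_sub_transpose_mulVec_add_smul_eq_zero_iff hR hd]
  refine and_congr_left fun hp => ?_
  have hblock : (1 - Rᵀ) * (Q + d⁻¹ • outer b b) + vecMulVec (Rᵀ *ᵥ p) b = (1 - Rᵀ) * Q := by
    rw [hp, mulVec_mulVec, mul_sub, mul_one, hR, mulVec_smul, smul_vecMulVec, ← mul_vecMulVec,
      outer, mul_add, Matrix.mul_smul, ← neg_sub 1, neg_mul, smul_neg, add_neg_cancel_right]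
  rw [hblock, transpose_mul, transpose_sub, transpose_one, transpose_transpose, hQ, mul_sub,
    sub_mul, mul_one, one_mul, sub_right_inj, eq_comm]

theorem sub_transpose_eq_skew_psia (M : M3) : M - Mᵀ = skew ((2 : ℝ) • psia M) := by
  ext i j
  fin_cases i <;> fin_cases j <;> simp [skew, psia] <;> ring

theorem skew_eq_zero_iff {x : V3} : skew x = 0 ↔ x = 0 := by
  refine ⟨fun h => ?_, fun h => by subst h; ext i j; fin_cases i <;> fin_cases j <;> simp [skew]⟩
  funext i
  fin_cases i
  · simpa [skew] using congr_fun₂ h 2 1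
  · simpa [skew] using congr_fun₂ h 0 2
  · simpa [skew] using congr_fun₂ h 1 0

theorem mul_skew_add_skew_mul {Q : M3} (hQ : Qᵀ = Q) (x : V3) :
    Q * skew x + skew x * Q = skew ((Q.trace • (1 : M3) - Q) *ᵥ x) := by
  have h10 : Q 1 0 = Q 0 1 := by simpa using congr_fun₂ hQ 0 1
  have h20 : Q 2 0 = Q 0 2 := by simpa using congr_fun₂ hQ 0 2
  have h21 : Q 2 1 = Q 1 2 := by simpa using congr_fun₂ hQ 1 2
  ext i j
  fin_cases i <;> fin_cases j <;>
    simp [skew, mul_apply, mulVec, vecMul, dotProduct, Fin.sum_univ_three, trace_fin_three,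
      one_apply, h10, h20, h21] <;> ring

theorem transpose_eq_self_of_transpose_mul_eq_mul {Q R : M3} (hQ : Qᵀ = Q)
    (hker : ∀ x : V3, (Q.trace • (1 : M3) - Q) *ᵥ x = 0 → x = 0) (hR : Rᵀ * R = 1)
    (hc : Rᵀ * Q = Q * R) : Rᵀ = R := by
  have hRRt : R * Rᵀ = 1 := mul_eq_one_comm.mp hR
  have hc' : R * Q = Q * Rᵀ := by
    calc R * Q = R * (Q * R) * Rᵀ := by rw [Matrix.mul_assoc, Matrix.mul_assoc, hRRt, mul_one]
      _ = Q * Rᵀ := by rw [← hc, ← Matrix.mul_assoc, hRRt, one_mul]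
  have hanti : Q * (R - Rᵀ) + (R - Rᵀ) * Q = 0 := by
    rw [mul_sub, sub_mul, hc, hc']
    abel
  rw [sub_transpose_eq_skew_psia, mul_skew_add_skew_mul hQ, skew_eq_zero_iff] at hanti
  have hR' := sub_transpose_eq_skew_psia R
  rw [hker _ hanti, skew_eq_zero_iff.mpr rfl, sub_eq_zero] at hR'
  exact hR'.symm

theorem Matrix.eq_zero_of_isSymm_of_idempotent_of_trace_eq_zero {n : Type*} [Fintype n]
    {D : Matrix n n ℝ} (hsymm : Dᵀ = D) (hidem : D * D = D) (htr : D.trace = 0) : D = 0 := by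
  rw [← trace_conjTranspose_mul_self_eq_zero_iff, conjTranspose_eq_transpose_of_trivial, hsymm,
    hidem, htr]

theorem Matrix.exists_eq_vecMulVec_of_isSymm_of_idempotent_of_trace_eq_one {n : Type*}
    [Fintype n] [DecidableEq n] {P : Matrix n n ℝ} (hsymm : Pᵀ = P) (hidem : P * P = P)
    (htr : P.trace = 1) : ∃ v : n → ℝ, v ⬝ᵥ v = 1 ∧ P = vecMulVec v v := by
  have hfix : ∀ x, P *ᵥ (P *ᵥ x) = P *ᵥ x := fun x => by rw [mulVec_mulVec, hidem]
  have hnorm : ∀ x, (P *ᵥ x) ⬝ᵥ (P *ᵥ x) = x ⬝ᵥ (P *ᵥ x) := fun x => by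
    rw [dotProduct_mulVec, ← mulVec_transpose, hsymm, hfix, dotProduct_comm]
  obtain ⟨j, -, hj⟩ : ∃ j ∈ Finset.univ, P j j ≠ 0 :=
    Finset.exists_ne_zero_of_sum_ne_zero (by simpa [trace] using htr.trans_ne one_ne_zero)
  set e : n → ℝ := Pi.single j 1
  have hPjj : e ⬝ᵥ (P *ᵥ e) = P j j := by simp [e]
  have hpos : 0 < P j j := lt_of_le_of_ne (hPjj ▸ hnorm e ▸ dotProduct_self_star_nonneg _) hj.symm
  set v := (√(P j j))⁻¹ • (P *ᵥ e)
  have hPv : P *ᵥ v = v := by rw [mulVec_smul, hfix]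
  have hvP : v ᵥ* P = v := by rw [← hsymm, vecMul_transpose, hPv]
  have hvv : v ⬝ᵥ v = 1 := by
    rw [dotProduct_smul, smul_dotProduct, hnorm, hPjj, smul_smul, ← mul_inv,
      Real.mul_self_sqrt hpos.le, smul_eq_mul, inv_mul_cancel₀ hpos.ne']
  -- `P - v vᵀ` is again a symmetric idempotent, now of trace zero.
  refine ⟨v, hvv, sub_eq_zero.mp (eq_zero_of_isSymm_of_idempotent_of_trace_eq_zero ?_ ?_ ?_)⟩
  · rw [transpose_sub, hsymm, transpose_vecMulVec]
  · rw [sub_mul, mul_sub, mul_sub, hidem, mul_vecMulVec, vecMulVec_mul, vecMulVec_mul_vecMulVec,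
      hPv, hvP, hvv, one_smul]
    abel
  · rw [trace_sub, htr, trace_vecMulVec, hvv, sub_self]

theorem Matrix.cayley_hamilton_fin_three (M : Matrix (Fin 3) (Fin 3) ℝ) :
    M * M * M - M.trace • (M * M) + ((M.trace ^ 2 - (M * M).trace) / 2) • M - M.det • 1 = 0 := by
  ext i j
  fin_cases i <;> fin_cases j <;>
    simp [mul_apply, trace, det_fin_three, Fin.sum_univ_three] <;> ring

theorem eq_one_or_eq_halfTurn_of_transpose_eq_self {R : M3} (hsymm : Rᵀ = R)
    (hR : Rᵀ * R = 1) (hdet : R.det = 1) :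
    R = 1 ∨ ∃ v : V3, v ⬝ᵥ v = 1 ∧ R = (2 : ℝ) • outer v v - 1 := by
  have hR2 : R * R = 1 := by rwa [hsymm] at hR
  have hRt : ((R.trace ^ 2 - 1) / 2) • R = (R.trace + 1) • (1 : M3) := by
    have hch := R.cayley_hamilton_fin_three
    rw [hR2, hdet, one_mul, trace_one] at hch
    simp only [Fintype.card_fin, Nat.cast_ofNat, one_smul] at hch
    linear_combination (norm := module) hch
  by_cases ht : R.trace = -1
  · right
    have hP : ((1 / 2 : ℝ) • (R + 1)) * ((1 / 2 : ℝ) • (R + 1)) = (1 / 2 : ℝ) • (R + 1) := by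
      rw [smul_mul_smul, add_mul, mul_add, mul_add, hR2, mul_one, one_mul, one_mul]
      module
    obtain ⟨v, hv, hPv⟩ := exists_eq_vecMulVec_of_isSymm_of_idempotent_of_trace_eq_one
      (by rw [transpose_smul, transpose_add, hsymm, transpose_one]) hP
      (by rw [trace_smul, trace_add, trace_one, ht]; norm_num)
    refine ⟨v, hv, ?_⟩
    rw [outer, ← hPv]
    module
  · left
    set c := (R.trace - 1) / 2 with hc_def
    have hcR : c • R = 1 := by
      refine smul_right_injective M3 (r := R.trace + 1) (fun h => ht ?_) ?_
      · linarith
      · simp only [← hRt, smul_smul]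
        congr 1
        ring
    have hRc : R = c • 1 := by
      calc R = R * (c • R) := by rw [hcR, mul_one]
        _ = c • 1 := by rw [Matrix.mul_smul, hR2]
    have hc : c * c = 1 := by
      have := congr_fun₂ hcR 0 0
      rw [hRc, smul_smul] at this
      simpa using this
    rcases mul_self_eq_one_iff.mp hc with h | h
    · rw [hRc, h, one_smul]
    · exact absurd (by linarith) ht

theorem transpose_halfTurn (v : V3) : ((2 : ℝ) • outer v v - 1)ᵀ = (2 : ℝ) • outer v v - 1 := by
  rw [transpose_sub, transpose_smul, outer, transpose_vecMulVec, transpose_one]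

theorem mul_halfTurn_comm_iff {Q : M3} (hQ : Qᵀ = Q) {v : V3} (hv : v ⬝ᵥ v = 1) :
    Q * ((2 : ℝ) • outer v v - 1) = ((2 : ℝ) • outer v v - 1) * Q ↔
      ∃ lam : ℝ, Q *ᵥ v = lam • v := by
  have hvQ : v ᵥ* Q = Q *ᵥ v := by rw [← hQ, vecMul_transpose, hQ]
  rw [mul_sub, sub_mul, mul_one, one_mul, sub_left_inj, Matrix.mul_smul, Matrix.smul_mul,
    (smul_right_injective M3 two_ne_zero).eq_iff, outer, mul_vecMulVec, vecMulVec_mul, hvQ]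
  constructor
  · intro h
    refine ⟨v ⬝ᵥ Q *ᵥ v, ?_⟩
    have := congrArg (· *ᵥ v) h
    simpa [vecMulVec_mulVec, hv, dotProduct_comm] using this
  · rintro ⟨lam, hlam⟩
    rw [hlam, vecMulVec_smul, smul_vecMulVec]

theorem transpose_mul_eq_mul_iff {Q R : M3} (hQ : Qᵀ = Q)
    (hker : ∀ x : V3, (Q.trace • (1 : M3) - Q) *ᵥ x = 0 → x = 0) (hR : Rᵀ * R = 1)
    (hdet : R.det = 1) :
    Rᵀ * Q = Q * R ↔ R = 1 ∨ ∃ (v : V3) (lam : ℝ), v ⬝ᵥ v = 1 ∧ Q *ᵥ v = lam • v ∧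
      R = (2 : ℝ) • outer v v - 1 := by
  constructor
  · intro hc
    have hsymm := transpose_eq_self_of_transpose_mul_eq_mul hQ hker hR hc
    rcases eq_one_or_eq_halfTurn_of_transpose_eq_self hsymm hR hdet with hR1 | ⟨v, hv, hRv⟩
    · exact Or.inl hR1
    · rw [hsymm, hRv] at hc
      obtain ⟨lam, hlam⟩ := (mul_halfTurn_comm_iff hQ hv).mp hc.symm
      exact Or.inr ⟨v, lam, hv, hlam, hRv⟩
  · rintro (rfl | ⟨v, lam, hv, hlam, rfl⟩)
    · rw [transpose_one, one_mul, mul_one]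
    · rw [transpose_halfTurn]
      exact ((mul_halfTurn_comm_iff hQ hv).mpr ⟨lam, hlam⟩).symm

theorem stmt7_general (Q : M3) (hsym : Qᵀ = Q)
    (hpd : ∀ x : V3, x ≠ 0 →
      0 < x ⬝ᵥ Matrix.mulVec ((1 / 2 : ℝ) • (Q.trace • (1 : M3) - Q)) x)
    (b : V3) (d : ℝ) (hd : 0 < d)
    (A : M4) (hA : A = Matrix.fromBlocks (Q + d⁻¹ • outer b b) (colV b) (rowV b)
      (Matrix.of fun _ _ => d)) :
    ∀ (R : M3) (p : V3), isRot R →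
      (Pproj ((1 - (SE3mat R p)⁻¹) * A) = 0 ↔
        (SE3mat R p = 1 ∨ ∃ (v : V3) (lam : ℝ), v ⬝ᵥ v = 1 ∧ Q.mulVec v = lam • v ∧
          R = (2 : ℝ) • outer v v - 1 ∧ p = (1 - R).mulVec (d⁻¹ • b))) := by
  rintro R p ⟨hR, hdet⟩
  have hker : ∀ x : V3, (Q.trace • (1 : M3) - Q) *ᵥ x = 0 → x = 0 := fun x hx => by
    by_contra hne
    simpa [smul_mulVec, hx] using hpd x hne
  rw [hA, Pproj_one_sub_SE3mat_inv_mul_eq_zero_iff hsym hR hd.ne',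
    transpose_mul_eq_mul_iff hsym hker hR hdet, SE3mat_eq_one_iff]
  constructor
  · rintro ⟨rfl | ⟨v, lam, hv, hlam, hRv⟩, hp⟩
    · exact Or.inl ⟨rfl, by rw [hp, sub_self, zero_mulVec]⟩
    · exact Or.inr ⟨v, lam, hv, hlam, hRv, hp⟩
  · rintro (⟨rfl, rfl⟩ | ⟨v, lam, hv, hlam, hRv, hp⟩)
    · exact ⟨Or.inl rfl, by rw [sub_self, zero_mulVec]⟩
    · exact ⟨Or.inr ⟨v, lam, hv, hlam, hRv⟩, hp⟩

theorem stmt7 (Q : M3) (hsym : Qᵀ = Q) (hpsd : ∀ x : V3, 0 ≤ x ⬝ᵥ Q.mulVec x)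
    (hpd : ∀ x : V3, x ≠ 0 →
      0 < x ⬝ᵥ Matrix.mulVec ((1 / 2 : ℝ) • (Q.trace • (1 : M3) - Q)) x)
    (b : V3) (d : ℝ) (hd : 0 < d)
    (A : M4) (hA : A = Matrix.fromBlocks (Q + d⁻¹ • outer b b) (colV b) (rowV b)
      (Matrix.of fun _ _ => d)) :
    ∀ (R : M3) (p : V3), isRot R →
      (Pproj ((1 - (SE3mat R p)⁻¹) * A) = 0 ↔
        (SE3mat R p = 1 ∨ ∃ (v : V3) (lam : ℝ), v ⬝ᵥ v = 1 ∧ Q.mulVec v = lam • v ∧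
          R = (2 : ℝ) • outer v v - 1 ∧ p = (1 - R).mulVec (d⁻¹ • b))) :=
  stmt7_general Q hsym hpd b d hd A hA
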